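/- (Trivial LLD solution for small γ.) Let X be a real n×p matrix and suppose 0 < γ < 1/√n. If (P⋆, C⋆) is an optimal point of the low-leverage decomposition (LLD) program for X with parameter γ, then P⋆ = 0. -/

import Mathlib

open Matrix
open scoped BigOperators

/-- The Euclidean (ℓ2) norm of a vector. -/
noncomputable def l2norm {p : ℕ} (u : Fin p → ℝ) : ℝ := Real.sqrt (∑ j, u j ^ 2)

/-- The trace inner product ⟨A, B⟩ = trace(Aᵀ B) on real matrices. -/
def tinner {n p : ℕ} (A B : Matrix (Fin n) (Fin p) ℝ) : ℝ := ∑ i, ∑ j, A i j * B i j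

/-- The spectral norm (ℓ2 → ℓ2 operator norm) of a matrix. -/
noncomputable def norm2to2 {n p : ℕ} (Q : Matrix (Fin n) (Fin p) ℝ) : ℝ :=
  sSup {t : ℝ | ∃ u : Fin p → ℝ, l2norm u ≤ 1 ∧ t = l2norm (Q.mulVec u)}

/-- The nuclear norm, defined as the dual of the spectral norm with respect to
the trace inner product. -/
noncomputable def nuclearNorm {n p : ℕ} (P : Matrix (Fin n) (Fin p) ℝ) : ℝ :=
  sSup {t : ℝ | ∃ A : Matrix (Fin n) (Fin p) ℝ, norm2to2 A ≤ 1 ∧ t = tinner P A}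

/-- The row-sum norm ‖C‖_{2,1}: the sum of the Euclidean norms of the rows. -/
noncomputable def rowSumNorm {n p : ℕ} (C : Matrix (Fin n) (Fin p) ℝ) : ℝ :=
  ∑ i, l2norm (C i)

/-!
Comparing the optimum with the feasible point `(0, X)` and using the triangle inequality for
`‖·‖_{2,1}` gives `‖P‖_* ≤ γ ‖P‖_{2,1}`. By Cauchy–Schwarz over the rows
`‖P‖_{2,1} ≤ √n ‖P‖_F`, and `‖P‖_F ≤ ‖P‖_*` (test the nuclear norm against `P / ‖P‖_F`, whose
spectral norm is at most one). Hence `‖P‖_F ≤ γ √n ‖P‖_F` with `γ √n < 1`, so `P = 0`.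
-/

section L2Norm

variable {p : ℕ}

lemma l2norm_eq_norm_toLp (u : Fin p → ℝ) :
    l2norm u = ‖(WithLp.toLp 2 u : EuclideanSpace ℝ (Fin p))‖ := by
  simp only [l2norm, EuclideanSpace.norm_eq, Real.norm_eq_abs, sq_abs]

lemma l2norm_nonneg (u : Fin p → ℝ) : 0 ≤ l2norm u := Real.sqrt_nonneg _

lemma l2norm_zero : l2norm (0 : Fin p → ℝ) = 0 := by simp [l2norm]

lemma l2norm_eq_zero_iff {u : Fin p → ℝ} : l2norm u = 0 ↔ u = 0 := by
  rw [l2norm_eq_norm_toLp, norm_eq_zero, WithLp.toLp_eq_zero]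

lemma l2norm_sq (u : Fin p → ℝ) : l2norm u ^ 2 = ∑ j, u j ^ 2 :=
  Real.sq_sqrt (Finset.sum_nonneg fun _ _ => sq_nonneg _)

lemma dotProduct_self_eq_l2norm_sq (u : Fin p → ℝ) : u ⬝ᵥ u = l2norm u ^ 2 := by
  rw [l2norm_sq]
  simp only [dotProduct, sq]

lemma abs_dotProduct_le_l2norm_mul (u v : Fin p → ℝ) : |u ⬝ᵥ v| ≤ l2norm u * l2norm v := by
  rw [l2norm_eq_norm_toLp, l2norm_eq_norm_toLp]
  simpa [PiLp.inner_apply, dotProduct, mul_comm] using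
    abs_real_inner_le_norm (WithLp.toLp 2 u : EuclideanSpace ℝ (Fin p)) (WithLp.toLp 2 v)

lemma l2norm_add_le (u v : Fin p → ℝ) : l2norm (u + v) ≤ l2norm u + l2norm v := by
  simpa only [l2norm_eq_norm_toLp, WithLp.toLp_add] using
    norm_add_le (WithLp.toLp 2 u : EuclideanSpace ℝ (Fin p)) (WithLp.toLp 2 v)

lemma l2norm_smul (c : ℝ) (u : Fin p → ℝ) : l2norm (c • u) = |c| * l2norm u := by
  simpa only [l2norm_eq_norm_toLp, WithLp.toLp_smul, Real.norm_eq_abs] using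
    norm_smul c (WithLp.toLp 2 u : EuclideanSpace ℝ (Fin p))

lemma abs_apply_le_l2norm (u : Fin p → ℝ) (j : Fin p) : |u j| ≤ l2norm u := by
  rw [← Real.sqrt_sq_eq_abs]
  exact Real.sqrt_le_sqrt (Finset.single_le_sum (fun k _ => sq_nonneg (u k)) (Finset.mem_univ j))

end L2Norm

section MatrixNorms

variable {n p : ℕ}

noncomputable def frobNorm (P : Matrix (Fin n) (Fin p) ℝ) : ℝ :=
  l2norm fun i => l2norm (P i)

lemma frobNorm_nonneg (P : Matrix (Fin n) (Fin p) ℝ) : 0 ≤ frobNorm P := l2norm_nonneg _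

lemma frobNorm_sq (P : Matrix (Fin n) (Fin p) ℝ) : frobNorm P ^ 2 = ∑ i, l2norm (P i) ^ 2 :=
  l2norm_sq _

lemma frobNorm_eq_zero_iff {P : Matrix (Fin n) (Fin p) ℝ} : frobNorm P = 0 ↔ P = 0 := by
  rw [frobNorm, l2norm_eq_zero_iff, funext_iff]
  simp only [Pi.zero_apply, l2norm_eq_zero_iff]
  exact funext_iff.symm

lemma frobNorm_smul (c : ℝ) (P : Matrix (Fin n) (Fin p) ℝ) :
    frobNorm (c • P) = |c| * frobNorm P := by
  have hrows : (fun i => l2norm ((c • P) i)) = |c| • fun i => l2norm (P i) := by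
    ext i
    exact l2norm_smul c (P i)
  rw [frobNorm, hrows, l2norm_smul, abs_abs, frobNorm]

lemma tinner_smul_right (c : ℝ) (P A : Matrix (Fin n) (Fin p) ℝ) :
    tinner P (c • A) = c * tinner P A := by
  simp only [tinner, Matrix.smul_apply, smul_eq_mul, Finset.mul_sum, mul_left_comm]

lemma tinner_self (P : Matrix (Fin n) (Fin p) ℝ) : tinner P P = frobNorm P ^ 2 := by
  simp only [frobNorm_sq, ← dotProduct_self_eq_l2norm_sq]
  rfl

lemma l2norm_mulVec_le_frobNorm_mul (Q : Matrix (Fin n) (Fin p) ℝ) (u : Fin p → ℝ) :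
    l2norm (Q *ᵥ u) ≤ frobNorm Q * l2norm u := by
  refine le_of_pow_le_pow_left₀ two_ne_zero
    (mul_nonneg (frobNorm_nonneg Q) (l2norm_nonneg u)) ?_
  rw [l2norm_sq, mul_pow, frobNorm_sq, Finset.sum_mul]
  gcongr with i
  rw [← mul_pow, ← sq_abs]
  exact pow_le_pow_left₀ (abs_nonneg _) (abs_dotProduct_le_l2norm_mul (Q i) u) 2

end MatrixNorms

section Norm2to2

variable {n p : ℕ}

lemma frobNorm_mem_upperBounds_norm2to2_set (Q : Matrix (Fin n) (Fin p) ℝ) :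
    frobNorm Q ∈ upperBounds {t : ℝ | ∃ u : Fin p → ℝ, l2norm u ≤ 1 ∧ t = l2norm (Q *ᵥ u)} := by
  rintro t ⟨u, hu, rfl⟩
  exact (l2norm_mulVec_le_frobNorm_mul Q u).trans
    (mul_le_of_le_one_right (frobNorm_nonneg Q) hu)

lemma l2norm_mulVec_le_norm2to2 (Q : Matrix (Fin n) (Fin p) ℝ) {u : Fin p → ℝ}
    (hu : l2norm u ≤ 1) : l2norm (Q *ᵥ u) ≤ norm2to2 Q :=
  le_csSup ⟨_, frobNorm_mem_upperBounds_norm2to2_set Q⟩ ⟨u, hu, rfl⟩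

lemma norm2to2_nonneg (Q : Matrix (Fin n) (Fin p) ℝ) : 0 ≤ norm2to2 Q :=
  (l2norm_nonneg _).trans (l2norm_mulVec_le_norm2to2 Q (by rw [l2norm_zero]; exact zero_le_one))

lemma norm2to2_le_frobNorm (Q : Matrix (Fin n) (Fin p) ℝ) : norm2to2 Q ≤ frobNorm Q :=
  csSup_le ⟨0, 0, by rw [l2norm_zero]; exact zero_le_one, by rw [mulVec_zero, l2norm_zero]⟩
    (frobNorm_mem_upperBounds_norm2to2_set Q)

lemma norm2to2_zero : norm2to2 (0 : Matrix (Fin n) (Fin p) ℝ) = 0 :=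
  le_antisymm ((norm2to2_le_frobNorm 0).trans_eq (frobNorm_eq_zero_iff.2 rfl)) (norm2to2_nonneg 0)

lemma l2norm_row_le_norm2to2 (A : Matrix (Fin n) (Fin p) ℝ) (i : Fin n) :
    l2norm (A i) ≤ norm2to2 A := by
  rcases (l2norm_nonneg (A i)).eq_or_lt with hzero | hpos
  · exact hzero ▸ norm2to2_nonneg A
  set u := (l2norm (A i))⁻¹ • A i
  have hu : l2norm u = 1 := by
    rw [l2norm_smul, abs_inv, abs_of_pos hpos, inv_mul_cancel₀ hpos.ne']
  have hentry : (A *ᵥ u) i = l2norm (A i) := by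
    rw [mulVec_smul, Pi.smul_apply, smul_eq_mul]
    change _ * (A i ⬝ᵥ A i) = _
    rw [dotProduct_self_eq_l2norm_sq]
    field_simp
  calc l2norm (A i) = (A *ᵥ u) i := hentry.symm
    _ ≤ |(A *ᵥ u) i| := le_abs_self _
    _ ≤ l2norm (A *ᵥ u) := abs_apply_le_l2norm _ i
    _ ≤ norm2to2 A := l2norm_mulVec_le_norm2to2 A hu.le

end Norm2to2

section NuclearNorm

variable {n p : ℕ}

lemma tinner_le_rowSumNorm_mul_norm2to2 (P A : Matrix (Fin n) (Fin p) ℝ) :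
    tinner P A ≤ rowSumNorm P * norm2to2 A := by
  calc tinner P A = ∑ i, P i ⬝ᵥ A i := rfl
    _ ≤ ∑ i, l2norm (P i) * norm2to2 A := by
      gcongr with i
      exact (le_abs_self _).trans <| (abs_dotProduct_le_l2norm_mul _ _).trans <|
        mul_le_mul_of_nonneg_left (l2norm_row_le_norm2to2 A i) (l2norm_nonneg _)
    _ = rowSumNorm P * norm2to2 A := Finset.sum_mul _ _ _ |>.symm

lemma tinner_le_nuclearNorm (P : Matrix (Fin n) (Fin p) ℝ) {A : Matrix (Fin n) (Fin p) ℝ}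
    (hA : norm2to2 A ≤ 1) : tinner P A ≤ nuclearNorm P := by
  refine le_csSup ⟨rowSumNorm P, ?_⟩ ⟨A, hA, rfl⟩
  rintro t ⟨B, hB, rfl⟩
  exact (tinner_le_rowSumNorm_mul_norm2to2 P B).trans
    (mul_le_of_le_one_right (Finset.sum_nonneg fun _ _ => l2norm_nonneg _) hB)

lemma nuclearNorm_zero : nuclearNorm (0 : Matrix (Fin n) (Fin p) ℝ) = 0 := by
  have hzero : norm2to2 (0 : Matrix (Fin n) (Fin p) ℝ) ≤ 1 := by
    rw [norm2to2_zero]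
    exact zero_le_one
  refine le_antisymm ?_ ?_
  · refine csSup_le ⟨0, 0, hzero, by simp [tinner]⟩ ?_
    rintro t ⟨A, -, rfl⟩
    simp [tinner]
  · simpa [tinner] using tinner_le_nuclearNorm 0 hzero

lemma frobNorm_le_nuclearNorm (P : Matrix (Fin n) (Fin p) ℝ) : frobNorm P ≤ nuclearNorm P := by
  rcases (frobNorm_nonneg P).eq_or_lt with hzero | hpos
  · rw [← hzero, frobNorm_eq_zero_iff.1 hzero.symm, nuclearNorm_zero]
  have hA : norm2to2 ((frobNorm P)⁻¹ • P) ≤ 1 := by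
    refine (norm2to2_le_frobNorm _).trans_eq ?_
    rw [frobNorm_smul, abs_inv, abs_of_pos hpos, inv_mul_cancel₀ hpos.ne']
  have htinner : tinner P ((frobNorm P)⁻¹ • P) = frobNorm P := by
    rw [tinner_smul_right, tinner_self]
    field_simp
  exact htinner ▸ tinner_le_nuclearNorm P hA

end NuclearNorm

section RowSumNorm

variable {n p : ℕ}

lemma rowSumNorm_add_le (P C : Matrix (Fin n) (Fin p) ℝ) :
    rowSumNorm (P + C) ≤ rowSumNorm P + rowSumNorm C := by
  rw [rowSumNorm, rowSumNorm, rowSumNorm, ← Finset.sum_add_distrib]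
  exact Finset.sum_le_sum fun i _ => l2norm_add_le (P i) (C i)

lemma rowSumNorm_le_sqrt_mul_frobNorm (P : Matrix (Fin n) (Fin p) ℝ) :
    rowSumNorm P ≤ Real.sqrt n * frobNorm P := by
  have hones : l2norm (fun _ : Fin n => (1 : ℝ)) = Real.sqrt n := by simp [l2norm]
  calc rowSumNorm P = (fun _ => 1) ⬝ᵥ fun i => l2norm (P i) := by simp [rowSumNorm, dotProduct]
    _ ≤ l2norm (fun _ : Fin n => (1 : ℝ)) * frobNorm P :=
      (le_abs_self _).trans (abs_dotProduct_le_l2norm_mul _ _)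
    _ = Real.sqrt n * frobNorm P := by rw [hones]

end RowSumNorm

theorem lld_trivial_for_small_gamma {n p : ℕ} (X P C : Matrix (Fin n) (Fin p) ℝ)
    (γ : ℝ) (hγ0 : 0 < γ) (hγ : γ < 1 / Real.sqrt n) (hPC : P + C = X)
    (hopt : ∀ P' C' : Matrix (Fin n) (Fin p) ℝ, P' + C' = X →
      nuclearNorm P + γ * rowSumNorm C ≤ nuclearNorm P' + γ * rowSumNorm C') :
    P = 0 := by
  have hsqrt : 0 < Real.sqrt n := by
    by_contra! h
    rw [le_antisymm h (Real.sqrt_nonneg _), div_zero] at hγ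
    exact hγ.not_gt hγ0
  have hγsqrt : γ * Real.sqrt n < 1 := (lt_div_iff₀ hsqrt).1 hγ
  have hnuclear : nuclearNorm P ≤ γ * rowSumNorm P := by
    have hzero := hopt 0 X (zero_add X)
    rw [nuclearNorm_zero, zero_add, ← hPC] at hzero
    have htriangle := mul_le_mul_of_nonneg_left (rowSumNorm_add_le P C) hγ0.le
    linarith
  have hfrob : frobNorm P ≤ γ * Real.sqrt n * frobNorm P :=
    calc frobNorm P ≤ nuclearNorm P := frobNorm_le_nuclearNorm P
      _ ≤ γ * rowSumNorm P := hnuclear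
      _ ≤ γ * (Real.sqrt n * frobNorm P) := by gcongr; exact rowSumNorm_le_sqrt_mul_frobNorm P
      _ = γ * Real.sqrt n * frobNorm P := (mul_assoc _ _ _).symm
  exact frobNorm_eq_zero_iff.1 (by nlinarith [frobNorm_nonneg P])
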